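/- Assume p_{i+} > 0 for every row i. For every integer t with 1 ≤ t < c and S_t(p_{+·}) ≠ 1, the measure λ^{K(t)}_{Y|X} = (√(∑_{i=1}^{r} S_t(p_{i·})² / p_{i+}) − S_t(p_{+·})) / (1 − S_t(p_{+·})) satisfies 0 ≤ λ^{K(t)}_{Y|X} ≤ 1. -/

import Mathlib

/-- `Smax t q` : the maximum, over subsets `T` of the index type with `T.card = t`,
of `∑ j ∈ T, q j` (i.e. the sum of the `t` largest entries of `q`). -/
noncomputable def Smax {n : ℕ} (t : ℕ) (q : Fin n → ℝ) : ℝ :=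
  sSup ((fun T : Finset (Fin n) => ∑ j ∈ T, q j) '' {T : Finset (Fin n) | T.card = t})

/-- Row marginals `p_{i+}`. -/
noncomputable def rowMarg {r c : ℕ} (p : Fin r → Fin c → ℝ) : Fin r → ℝ :=
  fun i => ∑ j, p i j

/-- Column marginals `p_{+j}`. -/
noncomputable def colMarg {r c : ℕ} (p : Fin r → Fin c → ℝ) : Fin c → ℝ :=
  fun j => ∑ i, p i j

/-- The measure `λ^{(t)}_{Y|X}` based on multi-categorical proportional reduction in error. -/
noncomputable def lambdaT {r c : ℕ} (t : ℕ) (p : Fin r → Fin c → ℝ) : ℝ :=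
  (∑ i, Smax t (p i) - Smax t (colMarg p)) / (1 - Smax t (colMarg p))

/-- The alternative measure `λ^{K(t)}_{Y|X}`. -/
noncomputable def lambdaKT {r c : ℕ} (t : ℕ) (p : Fin r → Fin c → ℝ) : ℝ :=
  (Real.sqrt (∑ i, (Smax t (p i)) ^ 2 / rowMarg p i) - Smax t (colMarg p)) /
    (1 - Smax t (colMarg p))

/-!
Let `S = S_t(p_{+·})`. Taking the `t` largest entries is subadditive, so
`S ≤ ∑ᵢ S_t(p_{i·})`, and Cauchy–Schwarz with weights `p_{i+}` (which sum to `1`) bounds the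
latter by `√(∑ᵢ S_t(p_{i·})² / p_{i+})`: the numerator is nonnegative. Since
`S_t(p_{i·}) ≤ p_{i+}`, the sum under the root is at most `∑ᵢ p_{i+} = 1`, so the numerator is at
most `1 - S`, which is positive as `S ≤ 1` and `S ≠ 1`.
-/

open Finset

section Smax

variable {n t : ℕ}

lemma sum_le_Smax (q : Fin n → ℝ) {T : Finset (Fin n)} (hT : T.card = t) :
    ∑ j ∈ T, q j ≤ Smax t q :=
  le_csSup ((Set.toFinite _).image _).bddAbove ⟨T, hT, rfl⟩

-- For `t > n` the supremum is over the empty set, so `Smax t q = sSup ∅ = 0`.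
lemma Smax_nonneg {q : Fin n → ℝ} (hq : 0 ≤ q) : 0 ≤ Smax t q :=
  Real.sSup_nonneg <| by
    rintro _ ⟨T, -, rfl⟩
    exact sum_nonneg fun j _ => hq j

lemma Smax_le_sum {q : Fin n → ℝ} (hq : 0 ≤ q) : Smax t q ≤ ∑ j, q j :=
  Real.sSup_le
    (by
      rintro _ ⟨T, -, rfl⟩
      exact sum_le_sum_of_subset_of_nonneg (subset_univ T) fun j _ _ => hq j)
    (sum_nonneg fun j _ => hq j)

lemma Smax_sum_le {ι : Type*} (s : Finset ι) {q : ι → Fin n → ℝ} (hq : ∀ i ∈ s, 0 ≤ q i) :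
    Smax t (∑ i ∈ s, q i) ≤ ∑ i ∈ s, Smax t (q i) :=
  Real.sSup_le
    (by
      rintro _ ⟨T, hT, rfl⟩
      simp only [Finset.sum_apply]
      rw [sum_comm]
      exact sum_le_sum fun i _ => sum_le_Smax (q i) hT)
    (sum_nonneg fun i hi => Smax_nonneg (hq i hi))

end Smax

section WeightedSums

variable {ι : Type*} (s : Finset ι) {a w : ι → ℝ}

lemma sum_le_sqrt_sum_sq_div (hw : ∀ i ∈ s, 0 < w i)
    (hw_sum : ∑ i ∈ s, w i = 1) :
    ∑ i ∈ s, a i ≤ √(∑ i ∈ s, a i ^ 2 / w i) := by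
  have hCS := sq_sum_div_le_sum_sq_div s a hw
  rw [hw_sum, div_one] at hCS
  exact Real.le_sqrt_of_sq_le hCS

lemma sum_sq_div_le_sum (ha : ∀ i ∈ s, 0 ≤ a i) (haw : ∀ i ∈ s, a i ≤ w i)
    (hw : ∀ i ∈ s, 0 < w i) :
    ∑ i ∈ s, a i ^ 2 / w i ≤ ∑ i ∈ s, w i :=
  sum_le_sum fun i hi => by
    rw [div_le_iff₀ (hw i hi)]
    nlinarith [ha i hi, haw i hi]

end WeightedSums

lemma colMarg_eq_sum {r c : ℕ} (p : Fin r → Fin c → ℝ) : colMarg p = ∑ i, p i := by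
  ext j
  simp [colMarg]

theorem lambdaKT_mem_unitInterval_general
    (r c : ℕ)
    (p : Fin r → Fin c → ℝ) (hp : ∀ i j, 0 ≤ p i j)
    (hsum : ∑ i, ∑ j, p i j = 1)
    (hpos : ∀ i, 0 < rowMarg p i)
    (t : ℕ)
    (hS : Smax t (colMarg p) ≠ 1) :
    0 ≤ lambdaKT t p ∧ lambdaKT t p ≤ 1 := by
  have hrow_nonneg : ∀ i, 0 ≤ Smax t (p i) := fun i => Smax_nonneg (hp i)
  have hcol_nonneg : 0 ≤ colMarg p := fun j => sum_nonneg fun i _ => hp i j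
  have hS_lt : Smax t (colMarg p) < 1 := by
    refine lt_of_le_of_ne ?_ hS
    calc Smax t (colMarg p) ≤ ∑ j, colMarg p j := Smax_le_sum hcol_nonneg
      _ = 1 := by rw [← hsum, sum_comm]; rfl
  have hS_le_sqrt : Smax t (colMarg p) ≤ √(∑ i, Smax t (p i) ^ 2 / rowMarg p i) :=
    calc Smax t (colMarg p) ≤ ∑ i, Smax t (p i) := by
          rw [colMarg_eq_sum]
          exact Smax_sum_le _ fun i _ => hp i
      _ ≤ _ := sum_le_sqrt_sum_sq_div _ (fun i _ => hpos i) hsum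
  have hsqrt_le_one : √(∑ i, Smax t (p i) ^ 2 / rowMarg p i) ≤ 1 := by
    rw [Real.sqrt_le_one, ← hsum]
    exact sum_sq_div_le_sum _ (fun i _ => hrow_nonneg i) (fun i _ => Smax_le_sum (hp i))
      fun i _ => hpos i
  have hden : 0 < 1 - Smax t (colMarg p) := sub_pos.mpr hS_lt
  exact ⟨div_nonneg (sub_nonneg.mpr hS_le_sqrt) hden.le,
    (div_le_one hden).mpr (by linarith)⟩

/-- For `1 ≤ t < c` with `S_t(p_{+·}) ≠ 1` and positive row marginals,
the alternative measure `λ^{K(t)}_{Y|X}` lies in `[0,1]`. -/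
theorem lambdaKT_mem_unitInterval
    (r c : ℕ) (hr : 2 ≤ r) (hc : 2 ≤ c)
    (p : Fin r → Fin c → ℝ) (hp : ∀ i j, 0 ≤ p i j)
    (hsum : ∑ i, ∑ j, p i j = 1)
    (hpos : ∀ i, 0 < rowMarg p i)
    (t : ℕ) (ht1 : 1 ≤ t) (htc : t < c)
    (hS : Smax t (colMarg p) ≠ 1) :
    0 ≤ lambdaKT t p ∧ lambdaKT t p ≤ 1 :=
  lambdaKT_mem_unitInterval_general r c p hp hsum hpos t hS
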